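/- arXiv:math/0204050 — 4 statements merged into one kernel-verified Lean document; each statement's English description precedes it below -/
import Mathlib

section
/- Let γ : ℝ → ℝⁿ be a C² curve with ‖γ'(s)‖ = 1 and ‖γ''(s)‖ ≤ C for all s, where C > 0. Then for all s ∈ (0, π/(2C)], ‖γ(s) − γ(0)‖ ≥ sin(sC)/C. -/
/-!
The unit tangent `T = γ'` moves on the unit sphere with speed at most `C`, so
`f t = ⟪T 0, T t⟫` satisfies `-f' ≤ C √(1 - f²)`. Comparing with `cos (t C)`, which solves the
extremal equation, gives `⟪T 0, T t⟫ ≥ cos (t C)` as long as `t C < π`; integrating from `0`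
to `s`, `‖γ s - γ 0‖ ≥ ⟪T 0, γ s - γ 0⟫ ≥ ∫₀ˢ cos (t C) dt = sin (s C) / C`.
-/

open Real Set Filter Topology RealInnerProductSpace

section Comparison

variable {f f' : ℝ → ℝ} {C t : ℝ}

-- Perturbing slope and phase by `ε` makes the comparison strict where the two graphs touch.
theorem cos_add_mul_le_of_neg_deriv_le (hf : ∀ t, HasDerivAt f (f' t) t) (hf0 : f 0 = 1)
    (hbound : ∀ t, -f' t ≤ C * √(1 - f t ^ 2)) (hC : 0 ≤ C) {ε : ℝ} (hε : 0 < ε)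
    (ht : 0 ≤ t) (htπ : ε + t * (C + ε) < π) : cos (ε + t * (C + ε)) ≤ f t := by
  have hB : ∀ x, HasDerivAt (fun x => -cos (ε + x * (C + ε)))
      (sin (ε + x * (C + ε)) * (C + ε)) x := fun x => by
    simpa using (((hasDerivAt_mul_const (C + ε)).const_add ε).cos).fun_neg
  have hcomp := image_le_of_deriv_right_lt_deriv_boundary' (a := 0) (b := t) (f := fun x => -f x)
    (fun x _ => (hf x).continuousAt.neg.continuousWithinAt) (fun x _ => (hf x).neg.hasDerivWithinAt)
    (by simpa [hf0] using cos_le_one ε) (fun x _ => (hB x).continuousAt.continuousWithinAt)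
    (fun x _ => (hB x).hasDerivWithinAt) ?_ ⟨ht, le_rfl⟩
  · simpa using hcomp
  rintro x ⟨hx0, hxt⟩ hfx
  have harg : 0 < ε + x * (C + ε) ∧ ε + x * (C + ε) < π :=
    ⟨by positivity, lt_of_le_of_lt (by gcongr) htπ⟩
  have hsin : 0 < sin (ε + x * (C + ε)) := sin_pos_of_pos_of_lt_pi harg.1 harg.2
  have hsqrt : √(1 - f x ^ 2) = sin (ε + x * (C + ε)) := by
    rw [neg_inj.1 hfx, sin_eq_sqrt_one_sub_cos_sq harg.1.le harg.2.le]
  calc -f' x ≤ C * sin (ε + x * (C + ε)) := hsqrt ▸ hbound x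
    _ < sin (ε + x * (C + ε)) * (C + ε) := by nlinarith

theorem cos_mul_le_of_neg_deriv_le (hf : ∀ t, HasDerivAt f (f' t) t) (hf0 : f 0 = 1)
    (hbound : ∀ t, -f' t ≤ C * √(1 - f t ^ 2)) (hC : 0 ≤ C) (ht : 0 ≤ t) (htπ : t * C < π) :
    cos (t * C) ≤ f t := by
  have hcont : Continuous fun ε => ε + t * (C + ε) := by fun_prop
  have hlim : Tendsto (fun ε => ε + t * (C + ε)) (𝓝[>] 0) (𝓝 (t * C)) := by
    simpa using (hcont.tendsto 0).mono_left nhdsWithin_le_nhds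
  refine le_of_tendsto (continuous_cos.continuousAt.tendsto.comp hlim) ?_
  filter_upwards [hlim.eventually (gt_mem_nhds htπ), self_mem_nhdsWithin] with ε hεπ hε
  exact cos_add_mul_le_of_neg_deriv_le hf hf0 hbound hC hε ht hεπ

end Comparison

section InnerProductSpace

variable {E : Type*} [NormedAddCommGroup E] [InnerProductSpace ℝ E]

theorem inner_eq_zero_of_hasDerivAt_of_norm_eq {T : ℝ → E} {T' : E} {t r : ℝ}
    (hT : HasDerivAt T T' t) (hnorm : ∀ u, ‖T u‖ = r) : ⟪T t, T'⟫ = 0 := by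
  have hconst : HasDerivAt (‖T ·‖ ^ 2) 0 t := by
    simpa only [hnorm] using hasDerivAt_const t (r ^ 2)
  simpa using hT.norm_sq.unique hconst

theorem abs_inner_le_norm_mul_sqrt_one_sub_inner_sq {u x y : E} (hu : ‖u‖ = 1) (hx : ‖x‖ = 1)
    (hxy : ⟪x, y⟫ = 0) : |⟪u, y⟫| ≤ ‖y‖ * √(1 - ⟪u, x⟫ ^ 2) := by
  have hy : ⟪u, y⟫ = ⟪u - ⟪u, x⟫ • x, y⟫ := by
    rw [inner_sub_left, real_inner_smul_left, hxy, mul_zero, sub_zero]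
  have hperp : ‖u - ⟪u, x⟫ • x‖ = √(1 - ⟪u, x⟫ ^ 2) := by
    rw [← sqrt_sq (norm_nonneg _), norm_sub_sq_real, real_inner_smul_right, norm_smul, hu, hx,
      norm_eq_abs, mul_one, sq_abs]
    ring_nf
  calc |⟪u, y⟫| = |⟪u - ⟪u, x⟫ • x, y⟫| := by rw [hy]
    _ ≤ ‖u - ⟪u, x⟫ • x‖ * ‖y‖ := abs_real_inner_le_norm _ _
    _ = ‖y‖ * √(1 - ⟪u, x⟫ ^ 2) := by rw [hperp, mul_comm]

theorem cos_mul_le_inner_of_norm_deriv_le {T T' : ℝ → E} {C t : ℝ}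
    (hT : ∀ t, HasDerivAt T (T' t) t) (hunit : ∀ t, ‖T t‖ = 1) (hT' : ∀ t, ‖T' t‖ ≤ C)
    (ht : 0 ≤ t) (htπ : t * C < π) : cos (t * C) ≤ ⟪T 0, T t⟫ := by
  have hf : ∀ t, HasDerivAt (fun t => ⟪T 0, T t⟫) ⟪T 0, T' t⟫ t := fun t => by
    simpa using (hasDerivAt_const t (T 0)).inner ℝ (hT t)
  have hbound : ∀ t, -⟪T 0, T' t⟫ ≤ C * √(1 - ⟪T 0, T t⟫ ^ 2) := fun t =>
    calc -⟪T 0, T' t⟫ ≤ |⟪T 0, T' t⟫| := neg_le_abs _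
      _ ≤ ‖T' t‖ * √(1 - ⟪T 0, T t⟫ ^ 2) := abs_inner_le_norm_mul_sqrt_one_sub_inner_sq
          (hunit 0) (hunit t) (inner_eq_zero_of_hasDerivAt_of_norm_eq (hT t) hunit)
      _ ≤ C * √(1 - ⟪T 0, T t⟫ ^ 2) := by gcongr; exact hT' t
  have hf0 : ⟪T 0, T 0⟫ = 1 := by rw [real_inner_self_eq_norm_sq, hunit 0, one_pow]
  exact cos_mul_le_of_neg_deriv_le hf hf0 hbound ((norm_nonneg _).trans (hT' 0)) ht htπ

theorem sin_mul_div_le_norm_sub {γ T T' : ℝ → E} {C s : ℝ} (hγ : ∀ t, HasDerivAt γ (T t) t)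
    (hT : ∀ t, HasDerivAt T (T' t) t) (hunit : ∀ t, ‖T t‖ = 1) (hT' : ∀ t, ‖T' t‖ ≤ C)
    (hC : 0 < C) (hs : 0 ≤ s) (hsπ : s * C ≤ π) : sin (s * C) / C ≤ ‖γ s - γ 0‖ := by
  have hsin : ∀ t, HasDerivAt (fun t => sin (t * C) / C) (cos (t * C)) t := fun t => by
    simpa [hC.ne'] using ((hasDerivAt_mul_const C).sin).div_const C
  have hchord : ∀ t, HasDerivAt (fun t => ⟪T 0, γ t - γ 0⟫) ⟪T 0, T t⟫ t := fun t => by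
    simpa using (hasDerivAt_const t (T 0)).inner ℝ ((hγ t).sub_const (γ 0))
  have hcomp := image_le_of_deriv_right_le_deriv_boundary (a := 0) (b := s)
    (fun t _ => (hsin t).continuousAt.continuousWithinAt) (fun t _ => (hsin t).hasDerivWithinAt)
    (by simp) (fun t _ => (hchord t).continuousAt.continuousWithinAt)
    (fun t _ => (hchord t).hasDerivWithinAt)
    (fun t ⟨ht0, hts⟩ => cos_mul_le_inner_of_norm_deriv_le hT hunit hT' ht0
      (lt_of_lt_of_le (by gcongr) hsπ)) ⟨hs, le_rfl⟩
  calc sin (s * C) / C ≤ ⟪T 0, γ s - γ 0⟫ := hcomp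
    _ ≤ ‖T 0‖ * ‖γ s - γ 0‖ := real_inner_le_norm _ _
    _ = ‖γ s - γ 0‖ := by rw [hunit 0, one_mul]

end InnerProductSpace

/-- **Schur-type chord bound.** If `γ : ℝ → ℝⁿ` is a `C²` unit-speed curve with
`‖γ''(s)‖ ≤ C` everywhere, then for `0 < s ≤ π/(2C)` one has
`‖γ(s) - γ(0)‖ ≥ sin (s C) / C`. -/
theorem chord_length_lower_bound {n : ℕ} (C : ℝ) (hC : 0 < C)
    (γ : ℝ → EuclideanSpace ℝ (Fin n))
    (hγ : ContDiff ℝ 2 γ)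
    (hunit : ∀ s : ℝ, ‖deriv γ s‖ = 1)
    (hcurv : ∀ s : ℝ, ‖deriv (deriv γ) s‖ ≤ C) :
    ∀ s : ℝ, 0 < s → s ≤ Real.pi / (2 * C) →
      Real.sin (s * C) / C ≤ ‖γ s - γ 0‖ := by
  intro s hs hsπ
  have hγ' : ContDiff ℝ 1 (deriv γ) := hγ.iterate_deriv' 1 1
  refine sin_mul_div_le_norm_sub (fun t => (hγ.differentiable two_ne_zero t).hasDerivAt)
    (fun t => (hγ'.differentiable one_ne_zero t).hasDerivAt) hunit hcurv hC hs.le ?_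
  rw [le_div_iff₀ (by positivity)] at hsπ
  linarith [pi_pos]
end

section
/- Let f : ℝᵏ → ℝᵐ be C^{1,1}, p ∈ ℝᵏ, v ∈ ℝᵏ and w ∈ ℝᵐ unit vectors such that f_vv(p) exists, and R > 0. Set I = (1 + ‖f_v(p)‖²)·√(1 + ‖∇(f·w)(p)‖²) and n = (−∇(f·w)(p), w)/√(1 + ‖∇(f·w)(p)‖²). If f_vv(p)·w > I/R, then the ball B((p,f(p)) + R·n, R) intersects the graph G of f; in fact there exist arbitrarily small t ≠ 0 with (p+tv, f(p+tv)) ∈ B((p,f(p)) + R·n, R). -/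
open scoped RealInnerProductSpace

/-- The pair `(x, y)` regarded as a point of Euclidean `ℝ^{k+m}` (the `ℓ²` product). -/
noncomputable def pairE {k m : ℕ} (x : EuclideanSpace ℝ (Fin k))
    (y : EuclideanSpace ℝ (Fin m)) :
    WithLp 2 (EuclideanSpace ℝ (Fin k) × EuclideanSpace ℝ (Fin m)) :=
  (WithLp.equiv 2 _).symm (x, y)

/-- The gradient of `x ↦ ⟪f x, w⟫` at `p`. -/
noncomputable def gradW {k m : ℕ} (f : EuclideanSpace ℝ (Fin k) → EuclideanSpace ℝ (Fin m))
    (w : EuclideanSpace ℝ (Fin m)) (p : EuclideanSpace ℝ (Fin k)) :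
    EuclideanSpace ℝ (Fin k) :=
  gradient (fun x => ⟪f x, w⟫) p

/-- The unit normal `n = (−∇(f·w)(p), w)/√(1 + ‖∇(f·w)(p)‖²)` to the graph of `f`
at `(p, f(p))` determined by `w`. -/
noncomputable def graphNormal {k m : ℕ}
    (f : EuclideanSpace ℝ (Fin k) → EuclideanSpace ℝ (Fin m))
    (w : EuclideanSpace ℝ (Fin m)) (p : EuclideanSpace ℝ (Fin k)) :
    WithLp 2 (EuclideanSpace ℝ (Fin k) × EuclideanSpace ℝ (Fin m)) :=
  (Real.sqrt (1 + ‖gradW f w p‖ ^ 2))⁻¹ • pairE (-(gradW f w p)) w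

/-- The graph of `f` as a subset of Euclidean `ℝ^{k+m}`. -/
def graphSet {k m : ℕ} (f : EuclideanSpace ℝ (Fin k) → EuclideanSpace ℝ (Fin m)) :
    Set (WithLp 2 (EuclideanSpace ℝ (Fin k) × EuclideanSpace ℝ (Fin m))) :=
  {z | ∃ x, z = pairE x (f x)}

/-! Restricted to the line `t ↦ p + t • v`, the graph is a curve `γ` through `z₀ = (p, f p)`,
and for a unit vector `n` the point `γ t` lies in `B(z₀ + R n, R)` iff
`‖γ t - z₀‖² < 2R ⟪γ t - z₀, n⟫`. Divided by `t²`, the left side tends to `1 + ‖f_v(p)‖²`.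
Since `⟪∇(f·w)(p), v⟫ = f_v(p)·w`, the normal `n` is orthogonal to the tangent `(v, f_v(p))`,
so the right side is a second-order Taylor remainder and tends to
`R f_vv(p)·w / √(1 + ‖∇(f·w)(p)‖²)`. The hypothesis says exactly that the second limit is the
larger one. -/

open Filter Topology Metric

theorem mem_ball_add_smul_iff {E : Type*} [NormedAddCommGroup E] [InnerProductSpace ℝ E]
    {z z₀ n : E} {R : ℝ} (hn : ‖n‖ = 1) (hR : 0 < R) :
    z ∈ ball (z₀ + R • n) R ↔ ‖z - z₀‖ ^ 2 < 2 * R * ⟪z - z₀, n⟫ := by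
  have hsq : ‖z - (z₀ + R • n)‖ ^ 2 = ‖z - z₀‖ ^ 2 - 2 * R * ⟪z - z₀, n⟫ + R ^ 2 := by
    rw [← sub_sub, norm_sub_sq_real, real_inner_smul_right, norm_smul, hn,
      Real.norm_of_nonneg hR.le]
    ring
  rw [mem_ball, dist_eq_norm, ← sq_lt_sq₀ (norm_nonneg _) hR.le, hsq]
  constructor <;> intro h <;> linarith

theorem tendsto_sub_sub_mul_div_sq {φ φ' : ℝ → ℝ} {c : ℝ}
    (hφ : ∀ᶠ t in 𝓝 0, HasDerivAt φ (φ' t) t) (hφ' : HasDerivAt φ' c 0) :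
    Tendsto (fun t => (φ t - φ 0 - t * φ' 0) / t ^ 2) (𝓝[≠] 0) (𝓝 (c / 2)) := by
  have hslope : Tendsto (fun t => (φ' t - φ' 0) / (2 * t)) (𝓝[≠] 0) (𝓝 (c / 2)) := by
    refine ((hasDerivAt_iff_tendsto_slope.1 hφ').div_const 2).congr fun t => ?_
    rw [slope_def_field, sub_zero, div_div, mul_comm]
  refine HasDerivAt.lhopital_zero_nhdsNE ?_ ?_ ?_ ?_ ?_ hslope
  · filter_upwards [nhdsWithin_le_nhds hφ] with t ht
    exact (ht.sub_const _).sub (hasDerivAt_mul_const _)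
  · exact Eventually.of_forall fun t => by simpa using hasDerivAt_pow 2 t
  · filter_upwards [self_mem_nhdsWithin] with t ht
    exact mul_ne_zero two_ne_zero ht
  · refine tendsto_nhdsWithin_of_tendsto_nhds ?_
    have hcont : ContinuousAt φ 0 := hφ.self_of_nhds.continuousAt
    simpa using (hcont.tendsto.sub_const (φ 0)).sub (tendsto_id.mul_const (φ' 0))
  · exact tendsto_nhdsWithin_of_tendsto_nhds (by simpa using (continuous_pow 2).tendsto (0 : ℝ))

theorem eventually_mem_ball_of_tendsto_div_sq {E : Type*} [NormedAddCommGroup E]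
    [InnerProductSpace ℝ E] {γ : ℝ → E} {z₀ n : E} {S κ R : ℝ} (hn : ‖n‖ = 1) (hR : 0 < R)
    (hS : Tendsto (fun t => ‖γ t - z₀‖ ^ 2 / t ^ 2) (𝓝[≠] 0) (𝓝 S))
    (hκ : Tendsto (fun t => ⟪γ t - z₀, n⟫ / t ^ 2) (𝓝[≠] 0) (𝓝 (κ / 2)))
    (hbig : S < R * κ) :
    ∀ᶠ t in 𝓝[≠] 0, γ t ∈ ball (z₀ + R • n) R := by
  have hneg : S - 2 * R * (κ / 2) < 0 := by linarith
  filter_upwards [(hS.sub (hκ.const_mul (2 * R))).eventually_lt_const hneg,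
    eventually_mem_nhdsWithin] with t ht ht0
  have ht0 : t ≠ 0 := ht0
  rw [mul_div_assoc', ← sub_div, div_lt_iff₀ (by positivity), zero_mul] at ht
  rw [mem_ball_add_smul_iff hn hR]
  linarith

theorem exists_ne_abs_lt_of_eventually_nhdsNE {P : ℝ → Prop} (h : ∀ᶠ t in 𝓝[≠] 0, P t)
    {δ : ℝ} (hδ : 0 < δ) : ∃ t, t ≠ 0 ∧ |t| < δ ∧ P t := by
  have hsmall : ∀ᶠ t in 𝓝[≠] (0 : ℝ), |t| < δ :=
    nhdsWithin_le_nhds ((continuous_abs.tendsto' 0 0 abs_zero).eventually_lt_const hδ)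
  obtain ⟨t, ht, ht0, htδ⟩ := (h.and (eventually_mem_nhdsWithin.and hsmall)).exists
  exact ⟨t, ht0, htδ, ht⟩

theorem DifferentiableAt.hasDerivAt_comp_add_smul {E F : Type*} [NormedAddCommGroup E]
    [NormedSpace ℝ E] [NormedAddCommGroup F] [NormedSpace ℝ F] {f : E → F} {p v : E} {t : ℝ}
    (hf : DifferentiableAt ℝ f (p + t • v)) :
    HasDerivAt (fun t : ℝ => f (p + t • v)) (fderiv ℝ f (p + t • v) v) t :=
  hf.hasFDerivAt.comp_hasDerivAt t (by simpa using ((hasDerivAt_id t).smul_const v).const_add p)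

section Graph

variable {k m : ℕ}

theorem pairE_sub (x x' : EuclideanSpace ℝ (Fin k)) (y y' : EuclideanSpace ℝ (Fin m)) :
    pairE x y - pairE x' y' = pairE (x - x') (y - y') := rfl

theorem inner_pairE (x x' : EuclideanSpace ℝ (Fin k)) (y y' : EuclideanSpace ℝ (Fin m)) :
    ⟪pairE x y, pairE x' y'⟫ = ⟪x, x'⟫ + ⟪y, y'⟫ := rfl

theorem norm_pairE_sq (x : EuclideanSpace ℝ (Fin k)) (y : EuclideanSpace ℝ (Fin m)) :
    ‖pairE x y‖ ^ 2 = ‖x‖ ^ 2 + ‖y‖ ^ 2 :=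
  WithLp.prod_norm_sq_eq_of_L2 _

theorem inner_gradW {f : EuclideanSpace ℝ (Fin k) → EuclideanSpace ℝ (Fin m)}
    {p : EuclideanSpace ℝ (Fin k)} (hf : DifferentiableAt ℝ f p) (w : EuclideanSpace ℝ (Fin m))
    (v : EuclideanSpace ℝ (Fin k)) :
    ⟪gradW f w p, v⟫ = ⟪fderiv ℝ f p v, w⟫ := by
  rw [gradW, gradient, InnerProductSpace.toDual_symm_apply,
    (hf.hasFDerivAt.inner ℝ (hasFDerivAt_const w p)).fderiv]
  simp [real_inner_comm]

theorem norm_graphNormal (f : EuclideanSpace ℝ (Fin k) → EuclideanSpace ℝ (Fin m))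
    {w : EuclideanSpace ℝ (Fin m)} (hw : ‖w‖ = 1) (p : EuclideanSpace ℝ (Fin k)) :
    ‖graphNormal f w p‖ = 1 := by
  have hsq : ‖pairE (-gradW f w p) w‖ = √(1 + ‖gradW f w p‖ ^ 2) := by
    rw [← Real.sqrt_sq (norm_nonneg _), norm_pairE_sq, norm_neg, hw, one_pow, add_comm]
  rw [graphNormal, norm_smul, hsq, norm_inv, Real.norm_of_nonneg (Real.sqrt_nonneg _),
    inv_mul_cancel₀ (by positivity)]

theorem inner_pairE_graphNormal (f : EuclideanSpace ℝ (Fin k) → EuclideanSpace ℝ (Fin m))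
    (w : EuclideanSpace ℝ (Fin m)) (p x : EuclideanSpace ℝ (Fin k))
    (y : EuclideanSpace ℝ (Fin m)) :
    ⟪pairE x y, graphNormal f w p⟫ = (⟪y, w⟫ - ⟪gradW f w p, x⟫) / √(1 + ‖gradW f w p‖ ^ 2) := by
  rw [graphNormal, real_inner_smul_right, inner_pairE, inner_neg_right, real_inner_comm x,
    inv_mul_eq_div, neg_add_eq_sub]

theorem tendsto_norm_pairE_sub_sq_div_sq
    {f : EuclideanSpace ℝ (Fin k) → EuclideanSpace ℝ (Fin m)} {p : EuclideanSpace ℝ (Fin k)}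
    (hf : DifferentiableAt ℝ f p) (v : EuclideanSpace ℝ (Fin k)) :
    Tendsto (fun t : ℝ => ‖pairE (p + t • v) (f (p + t • v)) - pairE p (f p)‖ ^ 2 / t ^ 2)
      (𝓝[≠] 0) (𝓝 (‖v‖ ^ 2 + ‖fderiv ℝ f p v‖ ^ 2)) := by
  have hderiv : HasDerivAt (fun t : ℝ => f (p + t • v)) (fderiv ℝ f p v) 0 := by
    simpa using DifferentiableAt.hasDerivAt_comp_add_smul (t := 0) (v := v) (by simpa using hf)
  have hslope := ((hasDerivAt_iff_tendsto_slope.1 hderiv).norm.pow 2).const_add (‖v‖ ^ 2)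
  refine hslope.congr' ?_
  filter_upwards [eventually_mem_nhdsWithin] with t ht
  have ht : t ≠ 0 := ht
  simp only [slope_def_module, pairE_sub, norm_pairE_sq, add_sub_cancel_left, norm_smul, mul_pow,
    Real.norm_eq_abs, sq_abs, sub_zero, zero_smul, add_zero]
  field_simp

theorem tendsto_inner_pairE_sub_graphNormal_div_sq
    {f : EuclideanSpace ℝ (Fin k) → EuclideanSpace ℝ (Fin m)} (hf : Differentiable ℝ f)
    {p v : EuclideanSpace ℝ (Fin k)} (w : EuclideanSpace ℝ (Fin m))
    {fvv : EuclideanSpace ℝ (Fin m)}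
    (hfvv : HasDerivAt (fun t : ℝ => fderiv ℝ f (p + t • v) v) fvv 0) :
    Tendsto (fun t : ℝ => ⟪pairE (p + t • v) (f (p + t • v)) - pairE p (f p), graphNormal f w p⟫
      / t ^ 2) (𝓝[≠] 0) (𝓝 (⟪fvv, w⟫ / √(1 + ‖gradW f w p‖ ^ 2) / 2)) := by
  have htaylor := tendsto_sub_sub_mul_div_sq (φ := fun t : ℝ => ⟪f (p + t • v), w⟫)
    (φ' := fun t : ℝ => ⟪fderiv ℝ f (p + t • v) v, w⟫)
    (Eventually.of_forall fun t =>
      by simpa using (hf _).hasDerivAt_comp_add_smul.inner ℝ (hasDerivAt_const t w))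
    (by simpa using hfvv.inner ℝ (hasDerivAt_const 0 w))
  rw [div_right_comm]
  refine (htaylor.div_const (√(1 + ‖gradW f w p‖ ^ 2))).congr fun t => ?_
  rw [pairE_sub, inner_pairE_graphNormal, add_sub_cancel_left, inner_sub_left,
    real_inner_smul_right, inner_gradW (hf p)]
  simp only [zero_smul, add_zero]
  ring

end Graph

theorem tangent_ball_meets_graph_of_large_secondDeriv_general {k m : ℕ}
    (f : EuclideanSpace ℝ (Fin k) → EuclideanSpace ℝ (Fin m))
    (hf : ContDiff ℝ 1 f)
    (p v : EuclideanSpace ℝ (Fin k)) (w : EuclideanSpace ℝ (Fin m))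
    (hv : ‖v‖ = 1) (hw : ‖w‖ = 1)
    (fvv : EuclideanSpace ℝ (Fin m))
    (hfvv : HasDerivAt (fun t : ℝ => fderiv ℝ f (p + t • v) v) fvv 0)
    (R : ℝ) (hR : 0 < R)
    (hbig : (1 + ‖fderiv ℝ f p v‖ ^ 2) * Real.sqrt (1 + ‖gradW f w p‖ ^ 2) / R
      < ⟪fvv, w⟫) :
    ∀ δ > (0 : ℝ), ∃ t : ℝ, t ≠ 0 ∧ |t| < δ ∧
      pairE (p + t • v) (f (p + t • v)) ∈
        Metric.ball (pairE p (f p) + R • graphNormal f w p) R := by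
  have hdf : Differentiable ℝ f := hf.differentiable one_ne_zero
  have hcurv : ‖v‖ ^ 2 + ‖fderiv ℝ f p v‖ ^ 2 < R * (⟪fvv, w⟫ / √(1 + ‖gradW f w p‖ ^ 2)) := by
    rw [hv, one_pow, mul_div_assoc', lt_div_iff₀ (by positivity), ← div_lt_iff₀' hR]
    exact hbig
  have hball := eventually_mem_ball_of_tendsto_div_sq (norm_graphNormal f hw p) hR
    (tendsto_norm_pairE_sub_sq_div_sq (hdf p) v)
    (tendsto_inner_pairE_sub_graphNormal_div_sq hdf w hfvv) hcurv
  exact fun δ hδ => exists_ne_abs_lt_of_eventually_nhdsNE hball hδ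

/-- **Lemma 3, converse direction.** If `f : ℝᵏ → ℝᵐ` is `C^{1,1}`, `v, w` are unit
vectors, `f_vv(p)` exists and `f_vv(p)·w > I/R` where
`I = (1 + ‖f_v(p)‖²)√(1 + ‖∇(f·w)(p)‖²)`, then the tangent ball
`B((p,f(p)) + R·n, R)` meets the graph of `f`: indeed there are arbitrarily small
`t ≠ 0` with `(p + tv, f(p + tv))` in this ball. -/
theorem tangent_ball_meets_graph_of_large_secondDeriv {k m : ℕ}
    (f : EuclideanSpace ℝ (Fin k) → EuclideanSpace ℝ (Fin m))
    (hf : ContDiff ℝ 1 f) (L : NNReal) (hlip : LipschitzWith L (fderiv ℝ f))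
    (p v : EuclideanSpace ℝ (Fin k)) (w : EuclideanSpace ℝ (Fin m))
    (hv : ‖v‖ = 1) (hw : ‖w‖ = 1)
    (fvv : EuclideanSpace ℝ (Fin m))
    (hfvv : HasDerivAt (fun t : ℝ => fderiv ℝ f (p + t • v) v) fvv 0)
    (R : ℝ) (hR : 0 < R)
    (hbig : (1 + ‖fderiv ℝ f p v‖ ^ 2) * Real.sqrt (1 + ‖gradW f w p‖ ^ 2) / R
      < ⟪fvv, w⟫) :
    ∀ δ > (0 : ℝ), ∃ t : ℝ, t ≠ 0 ∧ |t| < δ ∧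
      pairE (p + t • v) (f (p + t • v)) ∈
        Metric.ball (pairE p (f p) + R • graphNormal f w p) R :=
  tangent_ball_meets_graph_of_large_secondDeriv_general f hf p v w hv hw fvv hfvv R hR hbig
end

section
/- Let γ : I → ℝⁿ with I = (−π/(2κ), π/(2κ)) be a Lipschitz-differentiable unit-speed curve (‖γ'‖ ≡ 1) with ‖γ''(s)‖ ≤ κ almost everywhere, where κ > 0. Then the image of γ is disjoint from O_{γ(0)}(γ'(0), 1/κ) := ⋃_{w ⊥ γ'(0), ‖w‖=1} B(γ(0) + (1/κ)·w, 1/κ), the union of open balls of radius 1/κ tangent to the line through γ(0) with direction γ'(0). -/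
open scoped RealInnerProductSpace

/-!
The tangent `T = γ'` is `κ`-Lipschitz (integrate the a.e. bound on `γ''`), so as a curve on the
unit sphere it moves by spherical distance at most `κ |t|`: `∠(T 0, T t) ≤ κ |t|`. Hence, for
`0 ≤ t ≤ s` with `κ s ≤ π / 2`, `⟪T t, T 0⟫ ≥ cos (κ t)` and `⟪T t, w⟫ ≤ sin (κ t)`; integrating,
`Δ = γ s - γ 0` satisfies `⟪Δ, T 0⟫ ≥ κ⁻¹ sin (κ s)` and `⟪Δ, w⟫ ≤ κ⁻¹ (1 - cos (κ s))`, exactly the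
values attained on the circle of radius `κ⁻¹` through `γ 0` with centre `γ 0 + κ⁻¹ w`. These two
bounds alone force `‖Δ - κ⁻¹ w‖ ≥ κ⁻¹`. Negative `s` reduce to positive ones by reversing the curve.
-/

open MeasureTheory Set Real InnerProductGeometry Filter
open scoped NNReal Topology

theorem LipschitzOnWith.abs_sub_le_of_ae_abs_deriv_le {g : ℝ → ℝ} {a b C : ℝ} {L : ℝ≥0}
    (hg : LipschitzOnWith L g (uIcc a b)) (hC : ∀ᵐ t, t ∈ uIoc a b → |deriv g t| ≤ C) :
    |g b - g a| ≤ C * |b - a| := by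
  rw [← hg.absolutelyContinuousOnInterval.integral_deriv_eq_sub, ← Real.norm_eq_abs]
  exact intervalIntegral.norm_integral_le_of_norm_le_const_ae hC

theorem le_of_hasDerivAt_le_of_le {f g f' g' : ℝ → ℝ} {a b : ℝ} (hab : a ≤ b)
    (hf : ∀ t ∈ Icc a b, HasDerivAt f (f' t) t) (hg : ∀ t ∈ Icc a b, HasDerivAt g (g' t) t)
    (ha : f a ≤ g a) (hle : ∀ t ∈ Icc a b, f' t ≤ g' t) : f b ≤ g b :=
  image_le_of_deriv_right_le_deriv_boundary
    (fun t ht ↦ (hf t ht).continuousAt.continuousWithinAt)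
    (fun t ht ↦ (hf t (Ico_subset_Icc_self ht)).hasDerivWithinAt) ha
    (fun t ht ↦ (hg t ht).continuousAt.continuousWithinAt)
    (fun t ht ↦ (hg t (Ico_subset_Icc_self ht)).hasDerivWithinAt)
    (fun t ht ↦ hle t (Ico_subset_Icc_self ht)) ⟨hab, le_rfl⟩

section InnerProductSpace

variable {E : Type*} [NormedAddCommGroup E] [InnerProductSpace ℝ E]

theorem LipschitzOnWith.norm_sub_le_of_ae_norm_deriv_le [FiniteDimensional ℝ E] {f : ℝ → E}
    {a b : ℝ} {L K : ℝ≥0} (hf : LipschitzOnWith L f (uIcc a b))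
    (hK : ∀ᵐ t, t ∈ uIoc a b → ‖deriv f t‖ ≤ K) :
    ‖f b - f a‖ ≤ K * |b - a| := by
  have hdiff : ∀ᵐ t, t ∈ uIoc a b → DifferentiableAt ℝ f t := by
    filter_upwards [(hf.mono Ioo_subset_Icc_self).ae_differentiableWithinAt_of_mem_real,
      (Ioo_ae_eq_Ioc (a := min a b) (b := max a b)).mem_iff] with t ht hIoo hIoc
    exact (ht (hIoo.2 hIoc)).differentiableAt (isOpen_Ioo.mem_nhds (hIoo.2 hIoc))
  -- The FTC is only available for real absolutely continuous functions, so test the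
  -- displacement `e` against `t ↦ ⟪e, f t⟫`.
  set e := f b - f a with he
  have hsq : ‖e‖ ^ 2 ≤ ‖e‖ * (K * |b - a|) := by
    have := ((innerSL ℝ e).lipschitz.comp_lipschitzOnWith hf).abs_sub_le_of_ae_abs_deriv_le
      (C := ‖e‖ * K) <| by
        filter_upwards [hK, hdiff] with t htK htd ht
        rw [((innerSL ℝ e).hasFDerivAt.comp_hasDerivAt t (htd ht).hasDerivAt).deriv,
          innerSL_apply_apply]
        exact (abs_real_inner_le_norm _ _).trans (by gcongr; exact htK ht)
    simpa only [Function.comp_apply, innerSL_apply_apply, ← inner_sub_right, ← he,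
      real_inner_self_eq_norm_sq, abs_pow, abs_norm, mul_assoc] using this
  by_contra! hlt
  have hc : 0 ≤ (K : ℝ) * |b - a| := by positivity
  nlinarith

theorem LipschitzOnWith.of_ae_norm_deriv_le [FiniteDimensional ℝ E] {f : ℝ → E} {s : Set ℝ}
    (hs : s.OrdConnected) {L K : ℝ≥0} (hf : LipschitzOnWith L f s)
    (hK : ∀ᵐ t, t ∈ s → ‖deriv f t‖ ≤ K) :
    LipschitzOnWith K f s := by
  refine .of_dist_le_mul fun a ha b hb ↦ ?_
  have hab : uIcc b a ⊆ s := hs.uIcc_subset hb ha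
  rw [dist_eq_norm, Real.dist_eq]
  exact (hf.mono hab).norm_sub_le_of_ae_norm_deriv_le <| hK.mono fun t ht htI ↦
    ht (hab (uIoc_subset_uIcc htI))

theorem angle_eq_two_mul_arcsin_norm_sub_div_two {x y : E} (hx : ‖x‖ = 1) (hy : ‖y‖ = 1) :
    angle x y = 2 * arcsin (‖x - y‖ / 2) := by
  have hd : ‖x - y‖ / 2 ≤ 1 := by linarith [norm_sub_le x y]
  have hd0 : 0 ≤ ‖x - y‖ / 2 := by positivity
  have hinner : ⟪x, y⟫ = cos (2 * arcsin (‖x - y‖ / 2)) := by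
    rw [cos_two_mul, cos_arcsin, sq_sqrt (by nlinarith)]
    have := norm_sub_sq_real x y
    rw [hx, hy] at this
    linarith
  rw [angle, hx, hy, mul_one, div_one, hinner, arccos_cos (by linarith [arcsin_nonneg.2 hd0])]
  linarith [arcsin_le_pi_div_two (‖x - y‖ / 2)]

theorem angle_le_sum_angle {p : ℕ → E} (hp : p 0 ≠ 0) (n : ℕ) :
    angle (p 0) (p n) ≤ ∑ i ∈ Finset.range n, angle (p i) (p (i + 1)) := by
  induction n with
  | zero => simp [angle_self hp]
  | succ n ih =>
    rw [Finset.sum_range_succ]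
    exact (angle_le_angle_add_angle _ (p n) _).trans (by gcongr)

theorem tendsto_nat_mul_two_mul_arcsin (c : ℝ) :
    Tendsto (fun N : ℕ ↦ N * (2 * arcsin (c / N / 2))) atTop (𝓝 c) := by
  set h := dslope arcsin 0
  have hcont : ContinuousAt h 0 :=
    continuousAt_dslope_same.2 (differentiableAt_arcsin.2 ⟨by norm_num, by norm_num⟩)
  have h0 : h 0 = 1 := by simp [h, dslope_same, deriv_arcsin]
  have hy : Tendsto (fun N : ℕ ↦ c / N / 2) atTop (𝓝 0) := by
    simpa using (tendsto_const_div_atTop_nhds_zero_nat c).div_const 2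
  have := ((hcont.tendsto.comp hy).const_mul c)
  rw [h0, mul_one] at this
  refine this.congr' ((eventually_gt_atTop 0).mono fun N hN ↦ ?_)
  have harcsin := sub_smul_dslope arcsin 0 (c / N / 2)
  simp only [sub_zero, arcsin_zero, smul_eq_mul] at harcsin
  simp only [Function.comp_apply, h, ← harcsin]
  field_simp

theorem LipschitzOnWith.angle_le_mul_dist {f : ℝ → E} {s : Set ℝ} (hs : s.OrdConnected)
    {K : ℝ≥0} (hf : LipschitzOnWith K f s) (hunit : ∀ t ∈ s, ‖f t‖ = 1) {a b : ℝ}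
    (ha : a ∈ s) (hb : b ∈ s) : angle (f a) (f b) ≤ K * dist a b := by
  wlog hab : a ≤ b generalizing a b
  · rw [angle_comm, dist_comm]
    exact this hb ha (le_of_not_ge hab)
  -- Cut `[a, b]` into `N` steps of length `δ`, each turning by at most `2 arcsin (K δ / 2)`,
  -- and let `N → ∞`.
  have hfa : f a ≠ 0 := norm_ne_zero_iff.1 (by simp [hunit a ha])
  have hsubdiv (N : ℕ) (hN : 0 < N) :
      angle (f a) (f b) ≤ N * (2 * arcsin (K * dist a b / N / 2)) := by
    set δ := (b - a) / N
    have hNδ : N * δ = b - a := by simp only [δ]; field_simp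
    have hδ : 0 ≤ δ := div_nonneg (sub_nonneg.2 hab) N.cast_nonneg
    have hmem (i : ℕ) (hi : i ≤ N) : a + i * δ ∈ s := by
      have : (i : ℝ) * δ ≤ N * δ := by gcongr
      exact hs.out ha hb ⟨by nlinarith, by linarith⟩
    have hstep (i : ℕ) (hi : i < N) :
        angle (f (a + i * δ)) (f (a + (i + 1 : ℕ) * δ)) ≤ 2 * arcsin (K * dist a b / N / 2) := by
      rw [angle_eq_two_mul_arcsin_norm_sub_div_two (hunit _ (hmem i hi.le)) (hunit _ (hmem _ hi)),
        ← dist_eq_norm]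
      gcongr
      calc dist (f (a + i * δ)) (f (a + (i + 1 : ℕ) * δ))
          ≤ K * dist (a + i * δ) (a + (i + 1 : ℕ) * δ) :=
            hf.dist_le_mul _ (hmem i hi.le) _ (hmem _ hi)
        _ = K * dist a b / N := by
          rw [Real.dist_eq, Real.dist_eq, abs_sub_comm, abs_sub_comm a, ← hNδ]
          push_cast
          rw [show a + (i + 1) * δ - (a + i * δ) = δ by ring, abs_of_nonneg hδ,
            abs_of_nonneg (by positivity)]
          field_simp
    calc angle (f a) (f b) = angle (f (a + (0 : ℕ) * δ)) (f (a + N * δ)) := by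
          rw [hNδ]; simp
      _ ≤ ∑ i ∈ Finset.range N, angle (f (a + i * δ)) (f (a + (i + 1 : ℕ) * δ)) :=
          angle_le_sum_angle (p := fun i : ℕ ↦ f (a + i * δ)) (by simpa using hfa) N
      _ ≤ ∑ i ∈ Finset.range N, 2 * arcsin (K * dist a b / N / 2) :=
          Finset.sum_le_sum fun i hi ↦ hstep i (Finset.mem_range.1 hi)
      _ = N * (2 * arcsin (K * dist a b / N / 2)) := by simp
  exact ge_of_tendsto (tendsto_nat_mul_two_mul_arcsin _) ((eventually_gt_atTop 0).mono hsubdiv)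

theorem inner_sq_add_inner_sq_le_norm_sq {e w : E} (he : ‖e‖ = 1) (hw : ‖w‖ = 1)
    (hew : ⟪e, w⟫ = 0) (x : E) : ⟪e, x⟫ ^ 2 + ⟪w, x⟫ ^ 2 ≤ ‖x‖ ^ 2 := by
  have hv : Orthonormal ℝ ![e, w] := by
    rw [orthonormal_iff_ite]
    simp [Fin.forall_fin_two, he, hw, hew, real_inner_comm e w]
  simpa [Fin.sum_univ_two] using hv.sum_inner_products_le (s := Finset.univ) (x := x)

theorem inner_le_norm_mul_sin_angle {e w : E} (he : ‖e‖ = 1) (hw : ‖w‖ = 1)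
    (hew : ⟪e, w⟫ = 0) (x : E) : ⟪w, x⟫ ≤ ‖x‖ * sin (angle e x) := by
  have h := sin_angle_mul_norm_mul_norm e x
  rw [he, one_mul, real_inner_self_eq_norm_sq, real_inner_self_eq_norm_sq, he] at h
  rw [mul_comm, h]
  refine (le_abs_self _).trans (Real.abs_le_sqrt ?_)
  nlinarith [inner_sq_add_inner_sq_le_norm_sq he hw hew x]

theorem le_norm_sub_smul_of_inner_le {e w x : E} (he : ‖e‖ = 1) (hw : ‖w‖ = 1)
    (hew : ⟪e, w⟫ = 0) {r θ : ℝ} (hr : 0 < r) (hθ₀ : 0 ≤ θ) (hθ : θ ≤ π / 2)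
    (hex : r * sin θ ≤ ⟪e, x⟫) (hwx : ⟪w, x⟫ ≤ r * (1 - cos θ)) : r ≤ ‖x - r • w‖ := by
  have hexp : ‖x - r • w‖ ^ 2 = ‖x‖ ^ 2 - 2 * r * ⟪w, x⟫ + r ^ 2 := by
    rw [norm_sub_sq_real, real_inner_smul_right, norm_smul, hw, Real.norm_of_nonneg hr.le,
      real_inner_comm]
    ring
  have hsin : 0 ≤ sin θ := sin_nonneg_of_nonneg_of_le_pi hθ₀ (by linarith [pi_pos])
  have hcos : 0 ≤ cos θ := cos_nonneg_of_mem_Icc ⟨by linarith [pi_pos], hθ⟩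
  -- `⟪e, x⟫² ≥ r² sin² θ` and `r - ⟪w, x⟫ ≥ r cos θ ≥ 0` combine via `sin² + cos² = 1`.
  have hex' : (r * sin θ) ^ 2 ≤ ⟪e, x⟫ ^ 2 := pow_le_pow_left₀ (by positivity) hex 2
  have hwx' : (r * cos θ) ^ 2 ≤ (r - ⟪w, x⟫) ^ 2 :=
    pow_le_pow_left₀ (by positivity) (by linarith) 2
  have hsq : r ^ 2 ≤ ‖x - r • w‖ ^ 2 := by
    nlinarith [inner_sq_add_inner_sq_le_norm_sq he hw hew x, sin_sq_add_cos_sq θ]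
  exact le_of_pow_le_pow_left₀ two_ne_zero (norm_nonneg _) hsq

theorem inv_le_norm_sub_of_angle_le_of_nonneg {γ T : ℝ → E} {κ s : ℝ} (hκ : 0 < κ) (hs : 0 ≤ s)
    (hκs : κ * s ≤ π / 2) (hγ : ∀ t ∈ Icc 0 s, HasDerivAt γ (T t) t)
    (hT : ∀ t ∈ Icc 0 s, ‖T t‖ = 1) (hangle : ∀ t ∈ Icc 0 s, angle (T 0) (T t) ≤ κ * t)
    {w : E} (hw : ‖w‖ = 1) (hTw : ⟪T 0, w⟫ = 0) : κ⁻¹ ≤ ‖γ s - (γ 0 + κ⁻¹ • w)‖ := by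
  have h0 : (0 : ℝ) ∈ Icc 0 s := ⟨le_rfl, hs⟩
  have hκt {t} (ht : t ∈ Icc 0 s) : κ * t ≤ π / 2 := by nlinarith [ht.2]
  have hinner (v : E) (t) (ht : t ∈ Icc 0 s) : HasDerivAt (fun t ↦ ⟪v, γ t - γ 0⟫) ⟪v, T t⟫ t :=
    (innerSL ℝ v).hasFDerivAt.comp_hasDerivAt t ((hγ t ht).sub_const (γ 0))
  have hsin (t : ℝ) : HasDerivAt (fun t ↦ κ⁻¹ * sin (κ * t)) (cos (κ * t)) t := by
    refine ((((hasDerivAt_id t).const_mul κ).sin).const_mul κ⁻¹).congr_deriv ?_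
    simp only [id]; field_simp
  have hcos (t : ℝ) : HasDerivAt (fun t ↦ κ⁻¹ * (1 - cos (κ * t))) (sin (κ * t)) t := by
    refine (((((hasDerivAt_id t).const_mul κ).cos).const_sub 1).const_mul κ⁻¹).congr_deriv ?_
    simp only [id]; field_simp
  have htangent : κ⁻¹ * sin (κ * s) ≤ ⟪T 0, γ s - γ 0⟫ := by
    refine le_of_hasDerivAt_le_of_le hs (fun t _ ↦ hsin t) (hinner (T 0)) (by simp) fun t ht ↦ ?_
    rw [← cos_angle_mul_norm_mul_norm, hT 0 h0, hT t ht, mul_one, mul_one]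
    exact cos_le_cos_of_nonneg_of_le_pi (angle_nonneg _ _) (by linarith [hκt ht, pi_pos])
      (hangle t ht)
  have hnormal : ⟪w, γ s - γ 0⟫ ≤ κ⁻¹ * (1 - cos (κ * s)) := by
    refine le_of_hasDerivAt_le_of_le hs (hinner w) (fun t _ ↦ hcos t) (by simp) fun t ht ↦ ?_
    calc ⟪w, T t⟫ ≤ sin (angle (T 0) (T t)) := by
          simpa [hT t ht] using inner_le_norm_mul_sin_angle (hT 0 h0) hw hTw (T t)
      _ ≤ sin (κ * t) := sin_le_sin_of_le_of_le_pi_div_two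
          (by linarith [angle_nonneg (T 0) (T t), pi_pos]) (hκt ht) (hangle t ht)
  rw [← sub_sub]
  exact le_norm_sub_smul_of_inner_le (hT 0 h0) hw hTw (inv_pos.2 hκ)
    (mul_nonneg hκ.le hs) hκs htangent hnormal

theorem inv_le_norm_sub_of_angle_le {γ T : ℝ → E} {κ s : ℝ} (hκ : 0 < κ)
    (hκs : κ * |s| ≤ π / 2) (hγ : ∀ t ∈ uIcc 0 s, HasDerivAt γ (T t) t)
    (hT : ∀ t ∈ uIcc 0 s, ‖T t‖ = 1) (hangle : ∀ t ∈ uIcc 0 s, angle (T 0) (T t) ≤ κ * |t|)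
    {w : E} (hw : ‖w‖ = 1) (hTw : ⟪T 0, w⟫ = 0) : κ⁻¹ ≤ ‖γ s - (γ 0 + κ⁻¹ • w)‖ := by
  rcases le_total 0 s with hs | hs
  · rw [abs_of_nonneg hs] at hκs
    have hsub {t} (ht : t ∈ Icc 0 s) : t ∈ uIcc 0 s := Icc_subset_uIcc ht
    exact inv_le_norm_sub_of_angle_le_of_nonneg hκ hs hκs (fun t ht ↦ hγ t (hsub ht))
      (fun t ht ↦ hT t (hsub ht))
      (fun t ht ↦ by simpa [abs_of_nonneg ht.1] using hangle t (hsub ht)) hw hTw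
  · rw [abs_of_nonpos hs] at hκs
    have hsub {t} (ht : t ∈ Icc 0 (-s)) : -t ∈ uIcc 0 s :=
      Icc_subset_uIcc' ⟨by linarith [ht.2], by linarith [ht.1]⟩
    simpa using inv_le_norm_sub_of_angle_le_of_nonneg (γ := fun t ↦ γ (-t))
      (T := fun t ↦ -T (-t)) hκ (neg_nonneg.2 hs) hκs
      (fun t ht ↦ by simpa [Function.comp_def] using (hγ _ (hsub ht)).scomp t (hasDerivAt_neg t))
      (fun t ht ↦ by simpa using hT _ (hsub ht))
      (fun t ht ↦ by simpa [angle_neg_neg, abs_of_nonneg ht.1] using hangle _ (hsub ht)) hw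
      (by simpa using hTw)

end InnerProductSpace

/-- **Tangent-ball avoidance for curves of bounded curvature ([D6, Prop. 2(i)]).**
Let `γ` be a unit-speed `C^{1,1}` curve on `I = (−π/(2κ), π/(2κ))` in `ℝⁿ` with
`‖γ''(s)‖ ≤ κ` a.e. on `I`, where `κ > 0`. Then for every `s ∈ I`, `γ(s)` avoids
every open ball of radius `1/κ` centered at `γ(0) + (1/κ)·w` for a unit vector `w`
orthogonal to `γ'(0)` (i.e. the curve misses `O_{γ(0)}(γ'(0), 1/κ)`). -/
theorem curve_avoids_tangent_balls {n : ℕ} (κ : ℝ) (hκ : 0 < κ)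
    (γ : ℝ → EuclideanSpace ℝ (Fin n))
    (I : Set ℝ) (hI : I = Set.Ioo (-(Real.pi / (2 * κ))) (Real.pi / (2 * κ)))
    (hdiff : ∀ s ∈ I, DifferentiableAt ℝ γ s)
    (hlip : ∃ L : NNReal, LipschitzOnWith L (deriv γ) I)
    (hunit : ∀ s ∈ I, ‖deriv γ s‖ = 1)
    (hcurv : ∀ᵐ s ∂(MeasureTheory.volume : MeasureTheory.Measure ℝ),
      s ∈ I → ‖deriv (deriv γ) s‖ ≤ κ) :
    ∀ s ∈ I, ∀ w : EuclideanSpace ℝ (Fin n),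
      ⟪deriv γ 0, w⟫ = 0 → ‖w‖ = 1 →
      γ s ∉ Metric.ball (γ 0 + κ⁻¹ • w) κ⁻¹ := by
  intro s hs w hTw hw
  obtain ⟨L, hL⟩ := hlip
  have hIc : I.OrdConnected := hI ▸ ordConnected_Ioo
  have h0 : (0 : ℝ) ∈ I := hI ▸ ⟨by simp [hκ, pi_pos], by positivity⟩
  have hsub : uIcc 0 s ⊆ I := hIc.uIcc_subset h0 hs
  have hTlip : LipschitzOnWith κ.toNNReal (deriv γ) I :=
    hL.of_ae_norm_deriv_le hIc (by simpa [hκ.le] using hcurv)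
  have hκs : κ * |s| ≤ π / 2 := by
    rw [hI, mem_Ioo] at hs
    have := (lt_div_iff₀ (by positivity)).1 (abs_lt.2 hs)
    linarith
  rw [Metric.mem_ball, dist_eq_norm, not_lt]
  exact inv_le_norm_sub_of_angle_le hκ hκs (fun t ht ↦ (hdiff t (hsub ht)).hasDerivAt)
    (fun t ht ↦ hunit t (hsub ht))
    (fun t ht ↦ by simpa [hκ.le, Real.dist_eq] using hTlip.angle_le_mul_dist hIc hunit h0 (hsub ht))
    hw hTw
end

section
/- Let γ be a unit-speed curve in ℝⁿ defined near 0 such that γ''(0) exists and γ''(0) ≠ 0. Then for every R > 1/‖γ''(0)‖ there exists δ > 0 such that γ(t) ∈ B(γ(0) + R·γ''(0)/‖γ''(0)‖, R) for all t ∈ (0, δ). -/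
/-!
Put `v = γ'(0)`, `a = γ''(0)`, `w(t) = γ(t) - γ(0)` and let `c = R‖a‖⁻¹ a` be the centre of the
tangent ball, relative to `γ(0)`. By Peano's form of Taylor's theorem,
`w(t) = t v + (t²/2) a + o(t²)`, and differentiating `‖γ'‖² = 1` gives `⟪v, a⟫ = 0`. Hence
`‖w(t)‖² = t² + o(t²)` and `⟪w(t), a⟫ = (t²/2)‖a‖² + o(t²)`, so
`‖w(t) - c‖² - R² = ‖w(t)‖² - 2R‖a‖⁻¹⟪w(t), a⟫ = (1 - R‖a‖) t² + o(t²)`,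
which is negative for small `t ≠ 0` exactly because `R > 1/‖a‖`.
-/

open Filter Topology Asymptotics
open scoped RealInnerProductSpace

section NormedSpace

variable {E : Type*} [NormedAddCommGroup E] [NormedSpace ℝ E]

theorem isLittleO_sub_taylor_two_of_hasDerivAt_deriv {f : ℝ → E} {x₀ : ℝ} {a : E}
    (hdiff : ∀ᶠ x in 𝓝 x₀, DifferentiableAt ℝ f x) (hf'' : HasDerivAt (deriv f) a x₀) :
    (fun x ↦ f x - f x₀ - (x - x₀) • deriv f x₀ - ((x - x₀) ^ 2 / 2) • a)
      =o[𝓝 x₀] fun x ↦ (x - x₀) ^ 2 := by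
  obtain ⟨ε, hε, hball⟩ := Metric.eventually_nhds_iff_ball.mp hdiff
  set g : ℝ → E := fun x ↦ f x - (x - x₀) • deriv f x₀ - ((x - x₀) ^ 2 / 2) • a
  have hg : ∀ x ∈ Metric.ball x₀ ε,
      HasDerivWithinAt g (deriv f x - deriv f x₀ - (x - x₀) • a) (Metric.ball x₀ ε) x := by
    intro x hx
    have hlin : HasDerivAt (fun x : ℝ ↦ (x - x₀) • deriv f x₀) (deriv f x₀) x := by
      simpa using ((hasDerivAt_id x).sub_const x₀).smul_const (deriv f x₀)
    have hquad : HasDerivAt (fun x : ℝ ↦ ((x - x₀) ^ 2 / 2) • a) ((x - x₀) • a) x := by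
      convert ((((hasDerivAt_id' x).sub_const x₀).fun_pow 2).div_const 2).smul_const a using 2
      ring
    exact (((hball x hx).hasDerivAt.sub hlin).sub hquad).hasDerivWithinAt
  have hg' := hasDerivAt_iff_isLittleO.mp hf''
  rw [← nhdsWithin_eq_nhds.mpr (Metric.isOpen_ball.mem_nhds (Metric.mem_ball_self hε))] at hg' ⊢
  refine ((convex_ball x₀ ε).isLittleO_pow_succ_real (Metric.mem_ball_self hε) hg
    (hg'.congr_right (by simp)) (n := 1)).congr_left fun x ↦ ?_
  simp only [g, sub_self, zero_smul, ne_eq, OfNat.ofNat_ne_zero, not_false_eq_true, zero_pow,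
    zero_div, sub_zero]
  abel

theorem tendsto_inv_sq_smul_sub_of_isLittleO {w : ℝ → E} {v a : E}
    (hw : (fun t ↦ w t - t • v - (t ^ 2 / 2) • a) =o[𝓝 0] fun t ↦ t ^ 2) :
    Tendsto (fun t ↦ (t ^ 2)⁻¹ • (w t - t • v)) (𝓝[≠] 0) (𝓝 ((1 / 2 : ℝ) • a)) := by
  have hrem := (hw.mono (nhdsWithin_le_nhds (s := {0}ᶜ))).tendsto_inv_smul_nhds_zero.const_add
    ((1 / 2 : ℝ) • a)
  rw [add_zero] at hrem
  refine hrem.congr' (eventually_of_mem self_mem_nhdsWithin fun t (ht : t ≠ 0) ↦ ?_)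
  simp only [smul_sub, smul_smul]
  field_simp
  abel

theorem tendsto_inv_smul_of_tendsto_inv_sq_smul_sub {w : ℝ → E} {v b : E}
    (hw : Tendsto (fun t ↦ (t ^ 2)⁻¹ • (w t - t • v)) (𝓝[≠] 0) (𝓝 b)) :
    Tendsto (fun t ↦ t⁻¹ • w t) (𝓝[≠] 0) (𝓝 v) := by
  have ht : Tendsto (fun t : ℝ ↦ t) (𝓝[≠] 0) (𝓝 0) := nhdsWithin_le_nhds
  have hlim := (ht.smul hw).const_add v
  rw [zero_smul, add_zero] at hlim
  refine hlim.congr' (eventually_of_mem self_mem_nhdsWithin fun t (ht : t ≠ 0) ↦ ?_)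
  rw [smul_smul, show t * (t ^ 2)⁻¹ = t⁻¹ by field_simp, smul_sub, smul_smul,
    inv_mul_cancel₀ ht, one_smul]
  abel

end NormedSpace

section InnerProductSpace

variable {F : Type*} [NormedAddCommGroup F] [InnerProductSpace ℝ F]

theorem inner_eq_zero_of_hasDerivAt_of_eventually_norm_eq {f : ℝ → F} {x₀ c : ℝ} {a : F}
    (hnorm : ∀ᶠ x in 𝓝 x₀, ‖f x‖ = c) (hf : HasDerivAt f a x₀) : ⟪f x₀, a⟫ = 0 := by
  have hconst : HasDerivAt (‖f ·‖ ^ 2) 0 x₀ :=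
    (hasDerivAt_const x₀ (c ^ 2)).congr_of_eventuallyEq (hnorm.mono fun x hx ↦ by simp [hx])
  linarith [hf.norm_sq.unique hconst]

theorem eventually_norm_sub_smul_lt_of_isLittleO {w : ℝ → F} {v a : F} {R : ℝ}
    (hv : ‖v‖ = 1) (hva : ⟪v, a⟫ = 0) (ha : a ≠ 0) (hR : 1 / ‖a‖ < R)
    (hw : (fun t ↦ w t - t • v - (t ^ 2 / 2) • a) =o[𝓝 0] fun t ↦ t ^ 2) :
    ∀ᶠ t in 𝓝[≠] 0, ‖w t - (R * ‖a‖⁻¹) • a‖ < R := by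
  have hna : 0 < ‖a‖ := norm_pos_iff.mpr ha
  have hR0 : 0 < R := lt_trans (one_div_pos.mpr hna) hR
  have hquad := tendsto_inv_sq_smul_sub_of_isLittleO hw
  have hlim : Tendsto
      (fun t ↦ ‖t⁻¹ • w t‖ ^ 2 - 2 * (R * ‖a‖⁻¹) * ⟪(t ^ 2)⁻¹ • (w t - t • v), a⟫)
      (𝓝[≠] 0) (𝓝 (1 - R * ‖a‖)) := by
    convert ((tendsto_inv_smul_of_tendsto_inv_sq_smul_sub hquad).norm.pow 2).sub
      ((hquad.inner tendsto_const_nhds).const_mul (2 * (R * ‖a‖⁻¹))) using 2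
    rw [hv, real_inner_smul_left, real_inner_self_eq_norm_sq]
    field_simp
  have hneg : 1 - R * ‖a‖ < 0 := by
    linarith [(div_lt_iff₀ hna).mp hR]
  filter_upwards [hlim.eventually (gt_mem_nhds hneg), self_mem_nhdsWithin]
    with t hlt (ht : t ≠ 0)
  have hexpand : ‖w t - (R * ‖a‖⁻¹) • a‖ ^ 2 = t ^ 2 *
      (‖t⁻¹ • w t‖ ^ 2 - 2 * (R * ‖a‖⁻¹) * ⟪(t ^ 2)⁻¹ • (w t - t • v), a⟫) + R ^ 2 := by
    rw [norm_sub_sq_real, norm_smul, norm_smul, real_inner_smul_right, real_inner_smul_left,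
      inner_sub_left, real_inner_smul_left, hva, Real.norm_eq_abs, Real.norm_eq_abs,
      abs_of_pos (mul_pos hR0 (inv_pos.mpr hna))]
    simp only [mul_pow, sq_abs, mul_zero, sub_zero]
    field_simp
  refine (pow_lt_pow_iff_left₀ (norm_nonneg _) hR0.le two_ne_zero).mp ?_
  rw [hexpand]
  linarith [mul_neg_of_pos_of_neg (by positivity : 0 < t ^ 2) hlt]

end InnerProductSpace

/-- **A curve enters every tangent ball larger than its osculating circle
([D6, Prop. 2(ii)]).** Let `γ` be a unit-speed curve in `ℝⁿ` defined near `0` such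
that `γ''(0)` exists and `γ''(0) ≠ 0`. Then for every `R > 1/‖γ''(0)‖` there is
`δ > 0` with `γ(t) ∈ B(γ(0) + R·γ''(0)/‖γ''(0)‖, R)` for all `t ∈ (0, δ)`. -/
theorem curve_enters_large_tangent_ball {n : ℕ}
    (γ : ℝ → EuclideanSpace ℝ (Fin n)) (a : EuclideanSpace ℝ (Fin n))
    (hdiff : ∀ᶠ s in nhds (0 : ℝ), DifferentiableAt ℝ γ s)
    (hunit : ∀ᶠ s in nhds (0 : ℝ), ‖deriv γ s‖ = 1)
    (hsecond : HasDerivAt (deriv γ) a 0)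
    (ha : a ≠ 0) :
    ∀ R : ℝ, 1 / ‖a‖ < R → ∃ δ > (0 : ℝ), ∀ t ∈ Set.Ioo (0 : ℝ) δ,
      γ t ∈ Metric.ball (γ 0 + (R * ‖a‖⁻¹) • a) R := by
  intro R hR
  have horth := inner_eq_zero_of_hasDerivAt_of_eventually_norm_eq hunit hsecond
  have htaylor := isLittleO_sub_taylor_two_of_hasDerivAt_deriv hdiff hsecond
  simp only [sub_zero] at htaylor
  have hinside := eventually_norm_sub_smul_lt_of_isLittleO (w := fun t ↦ γ t - γ 0)
    hunit.self_of_nhds horth ha hR htaylor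
  obtain ⟨δ, hδ, hsub⟩ := mem_nhdsGT_iff_exists_Ioo_subset.mp (nhdsGT_le_nhdsNE 0 hinside)
  refine ⟨δ, hδ, fun t ht ↦ ?_⟩
  rw [Metric.mem_ball, dist_eq_norm, ← sub_sub]
  exact hsub ht
end
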